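/- arXiv:1710.07887 — 2 statements merged into one kernel-verified Lean document; each statement's English description precedes it below -/
import Mathlib

section
/- (Generalized Euler theorem) Let g : ℝ^d → ℝ be convex and positive homogeneous of degree k > 0. Then for every x ∈ ℝ^d and every subgradient v ∈ ∂g(x), we have ⟨v, x⟩ = k·g(x). -/
/-!
On the ray through `x`, the subgradient inequality says that `t ↦ g (t • x) - (t - 1) * ⟪v, x⟫`
is minimal at `t = 1`. Near `t = 1` homogeneity gives `g (t • x) = t ^ k * g x`, so the
derivative `k * g x - ⟪v, x⟫` at the minimum vanishes.
-/

open RealInnerProductSpace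

theorem inner_subgradient_eq_of_hasDerivAt_smul {E : Type*} [NormedAddCommGroup E]
    [InnerProductSpace ℝ E] {f : E → ℝ} {x v : E} {D : ℝ}
    (hv : ∀ y, f x + ⟪v, y - x⟫ ≤ f y) (hD : HasDerivAt (fun t : ℝ => f (t • x)) D 1) :
    ⟪v, x⟫ = D := by
  set φ : ℝ → ℝ := fun t => f (t • x) - (t - 1) * ⟪v, x⟫
  have hmin : IsMinOn φ Set.univ 1 := fun t _ => by
    have h := hv (t • x)
    rw [inner_sub_right, real_inner_smul_right] at h
    simp only [Set.mem_ofPred_eq, φ, one_smul]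
    linarith
  have hlin : HasDerivAt (fun t : ℝ => (t - 1) * ⟪v, x⟫) ⟪v, x⟫ 1 := by
    simpa using ((hasDerivAt_id (1 : ℝ)).sub_const 1).mul_const ⟪v, x⟫
  have hφ : HasDerivAt φ (D - ⟪v, x⟫) 1 := hD.sub hlin
  linarith [(hmin.isLocalMin Filter.univ_mem).hasDerivAt_eq_zero hφ]

theorem hasDerivAt_comp_smul_of_homogeneous {E : Type*} [AddCommGroup E] [Module ℝ E]
    {g : E → ℝ} {x : E} {k : ℝ} (hhom : ∀ α : ℝ, 0 < α → g (α • x) = α ^ k * g x) :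
    HasDerivAt (fun t : ℝ => g (t • x)) (k * g x) 1 := by
  have hpow : HasDerivAt (fun t : ℝ => t ^ k * g x) (k * g x) 1 := by
    simpa using (Real.hasDerivAt_rpow_const (p := k) (Or.inl one_ne_zero)).mul_const (g x)
  refine hpow.congr_of_eventuallyEq ?_
  filter_upwards [Ioi_mem_nhds one_pos] with t ht
  exact hhom t ht

theorem euler_generalized_general (d : ℕ) (k : ℝ)
    (g : EuclideanSpace ℝ (Fin d) → ℝ)
    (hhom : ∀ α : ℝ, 0 < α → ∀ x, g (α • x) = α ^ k * g x)
    (x v : EuclideanSpace ℝ (Fin d))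
    (hv : ∀ y, g x + ⟪v, y - x⟫ ≤ g y) :
    ⟪v, x⟫ = k * g x :=
  inner_subgradient_eq_of_hasDerivAt_smul hv
    (hasDerivAt_comp_smul_of_homogeneous fun α hα => hhom α hα x)

theorem euler_generalized (d : ℕ) (k : ℝ) (hk : 0 < k)
    (g : EuclideanSpace ℝ (Fin d) → ℝ)
    (hconv : ConvexOn ℝ Set.univ g)
    (hhom : ∀ α : ℝ, 0 < α → ∀ x, g (α • x) = α ^ k * g x)
    (x v : EuclideanSpace ℝ (Fin d))
    (hv : ∀ y, g x + ⟪v, y - x⟫ ≤ g y) :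
    ⟪v, x⟫ = k * g x :=
  euler_generalized_general d k g hhom x v hv
end

section
/- Let f : ℝ^d → ℝ be convex, positive homogeneous of degree r > 1, and positive away from the origin. Then for every fixed x ∈ ℝ^d, the function β ↦ ⟨x̂(β), β⟩, where x̂(β) is any maximizer of x̂ ↦ ⟨x̂, β⟩ - f(x̂ - x), is well-defined (independent of the choice of maximizer), equals ⟨x, β⟩ + s·f*(β) with 1/r + 1/s = 1, and is convex in β. -/
/-!
If `x̂` maximizes `⟪·, β⟫ - f (· - x)`, then `y = x̂ - x` maximizes `⟪·, β⟫ - f`, so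
`f* β = ⟪y, β⟫ - f y`. Comparing `y` with its rescalings `α • y`, the first-order condition
at `α = 1` is Euler's identity `⟪y, β⟫ = r * f y`, whence
`⟪x̂, β⟫ = ⟪x, β⟫ + r * f y = ⟪x, β⟫ + s * f* β`.
Convexity holds because `f*` is a supremum of affine functions of `β`; it is finite since `f`
grows at least like `c * ‖z‖ ^ r` with `c` the minimum of `f` on the unit sphere, and `r > 1`.
-/

open RealInnerProductSpace

theorem ConvexOn.ciSup {E ι : Type*} [AddCommGroup E] [Module ℝ E] [Nonempty ι] {s : Set E}
    {g : ι → E → ℝ} (hg : ∀ i, ConvexOn ℝ s (g i))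
    (hbdd : ∀ x ∈ s, BddAbove (Set.range fun i => g i x)) :
    ConvexOn ℝ s fun x => ⨆ i, g i x := by
  refine ⟨(hg (Classical.arbitrary ι)).1, fun x hx y hy a b ha hb hab => ciSup_le fun i => ?_⟩
  calc g i (a • x + b • y) ≤ a * g i x + b * g i y := (hg i).2 hx hy ha hb hab
    _ ≤ a * (⨆ i, g i x) + b * ⨆ i, g i y := by
      gcongr
      · exact le_ciSup (hbdd x hx) i
      · exact le_ciSup (hbdd y hy) i

-- Beyond `T = (b / c) ^ (r - 1)⁻¹` the term `c * t ^ r` dominates `b * t`.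
theorem Real.mul_sub_mul_rpow_le {b c r t : ℝ} (hb : 0 ≤ b) (hc : 0 < c) (hr : 1 < r)
    (ht : 0 ≤ t) : b * t - c * t ^ r ≤ b * (b / c) ^ (r - 1)⁻¹ := by
  set T := (b / c) ^ (r - 1)⁻¹
  have hT : 0 ≤ T := by positivity
  rcases le_or_gt t T with htT | hTt
  · nlinarith [Real.rpow_nonneg ht r]
  · have hTr : T ^ (r - 1) = b / c := by
      rw [← Real.rpow_mul (div_nonneg hb hc.le), inv_mul_cancel₀ (by linarith), Real.rpow_one]
    have hbt : b ≤ c * t ^ (r - 1) := by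
      rw [← div_le_iff₀' hc, ← hTr]
      exact Real.rpow_le_rpow (by positivity) hTt.le (by linarith)
    have hsplit : t ^ r = t ^ (r - 1) * t := by
      rw [← Real.rpow_add_one (hT.trans_lt hTt).ne']
      ring_nf
    nlinarith [mul_le_mul_of_nonneg_right hbt ht, hT]

theorem convexOn_iSup_inner_sub {E : Type*} [NormedAddCommGroup E] [InnerProductSpace ℝ E]
    {f : E → ℝ} (hbdd : ∀ β, BddAbove (Set.range fun z => ⟪β, z⟫ - f z)) :
    ConvexOn ℝ Set.univ fun β => ⨆ z, ⟪β, z⟫ - f z :=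
  ConvexOn.ciSup (fun z => (((innerₛₗ ℝ).flip z).convexOn convex_univ).sub
    (concaveOn_const (f z) convex_univ)) fun β _ => hbdd β

def IsPosHomogeneous {E : Type*} [SMul ℝ E] (r : ℝ) (f : E → ℝ) : Prop :=
  ∀ α : ℝ, 0 < α → ∀ z, f (α • z) = α ^ r * f z

namespace IsPosHomogeneous

variable {E : Type*} {r : ℝ} {f : E → ℝ}

theorem map_zero [AddCommGroup E] [Module ℝ E] (hf : IsPosHomogeneous r f) (hr : 0 < r) :
    f 0 = 0 := by
  have h := hf 2 two_pos 0
  rw [smul_zero] at h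
  have h2 : 1 < (2 : ℝ) ^ r := Real.one_lt_rpow one_lt_two hr
  nlinarith

theorem inner_eq_mul_of_forall_le [NormedAddCommGroup E] [InnerProductSpace ℝ E]
    (hf : IsPosHomogeneous r f) {β y : E} (hy : ∀ w, ⟪w, β⟫ - f w ≤ ⟪y, β⟫ - f y) :
    ⟪y, β⟫ = r * f y := by
  have hmax : IsLocalMax (fun α : ℝ => α * ⟪y, β⟫ - α ^ r * f y) 1 := by
    filter_upwards [Ioi_mem_nhds one_pos] with α hα
    have h := hy (α • y)
    rw [hf α hα y, real_inner_smul_left] at h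
    simpa using h
  have hderiv :
      HasDerivAt (fun α : ℝ => α * ⟪y, β⟫ - α ^ r * f y) (⟪y, β⟫ - r * f y) 1 := by
    have h := ((hasDerivAt_id (1 : ℝ)).mul_const ⟪y, β⟫).sub
      ((Real.hasDerivAt_rpow_const (p := r) (Or.inl one_ne_zero)).mul_const (f y))
    simp only [Real.one_rpow, one_mul, mul_one] at h
    exact h
  linarith [hmax.hasDerivAt_eq_zero hderiv]

theorem inner_eq_mul_iSup_of_forall_le [NormedAddCommGroup E] [InnerProductSpace ℝ E]
    (hf : IsPosHomogeneous r f) {s : ℝ} (hrs : r.HolderConjugate s) {β y : E}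
    (hy : ∀ w, ⟪w, β⟫ - f w ≤ ⟪y, β⟫ - f y) :
    ⟪y, β⟫ = s * ⨆ z, ⟪β, z⟫ - f z := by
  have hconj : (⨆ z, ⟪β, z⟫ - f z) = ⟪y, β⟫ - f y :=
    ciSup_eq_of_forall_le_of_forall_lt_exists_gt (fun z => real_inner_comm z β ▸ hy z)
      fun _ h => ⟨y, by rwa [real_inner_comm]⟩
  rw [hconj, hf.inner_eq_mul_of_forall_le hy]
  linear_combination (-f y) * hrs.sub_one_mul_conj

theorem exists_pos_mul_norm_rpow_le [NormedAddCommGroup E] [NormedSpace ℝ E]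
    [FiniteDimensional ℝ E] (hf : IsPosHomogeneous r f) (hr : 0 < r) (hcont : Continuous f)
    (hpos : ∀ z, z ≠ 0 → 0 < f z) : ∃ c > 0, ∀ z, c * ‖z‖ ^ r ≤ f z := by
  rcases subsingleton_or_nontrivial E with _ | _
  · refine ⟨1, one_pos, fun z => ?_⟩
    rw [Subsingleton.elim z 0, hf.map_zero hr, norm_zero, Real.zero_rpow hr.ne', mul_zero]
  obtain ⟨u, hu, hmin⟩ := (isCompact_sphere (0 : E) 1).exists_isMinOn
    (NormedSpace.sphere_nonempty.mpr zero_le_one) hcont.continuousOn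
  refine ⟨f u, hpos u (ne_zero_of_mem_unit_sphere ⟨u, hu⟩), fun z => ?_⟩
  rcases eq_or_ne z 0 with rfl | hz
  · rw [hf.map_zero hr, norm_zero, Real.zero_rpow hr.ne', mul_zero]
  have hz' : 0 < ‖z‖ := norm_pos_iff.mpr hz
  have hunit : ‖z‖⁻¹ • z ∈ Metric.sphere (0 : E) 1 := by
    simp [norm_smul, hz'.ne']
  calc f u * ‖z‖ ^ r ≤ f (‖z‖⁻¹ • z) * ‖z‖ ^ r := by gcongr; exact hmin hunit
    _ = f z := by rw [mul_comm, ← hf _ hz', smul_inv_smul₀ hz'.ne']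

theorem bddAbove_range_inner_sub [NormedAddCommGroup E] [InnerProductSpace ℝ E]
    [FiniteDimensional ℝ E] (hf : IsPosHomogeneous r f) (hr : 1 < r) (hcont : Continuous f)
    (hpos : ∀ z, z ≠ 0 → 0 < f z) (β : E) :
    BddAbove (Set.range fun z => ⟪β, z⟫ - f z) := by
  obtain ⟨c, hc, hcf⟩ := hf.exists_pos_mul_norm_rpow_le (by linarith) hcont hpos
  refine ⟨‖β‖ * (‖β‖ / c) ^ (r - 1)⁻¹, ?_⟩
  rintro _ ⟨z, rfl⟩
  calc ⟪β, z⟫ - f z ≤ ‖β‖ * ‖z‖ - c * ‖z‖ ^ r := by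
        linarith [real_inner_le_norm β z, hcf z]
    _ ≤ ‖β‖ * (‖β‖ / c) ^ (r - 1)⁻¹ :=
        Real.mul_sub_mul_rpow_le (norm_nonneg β) hc hr (norm_nonneg z)

end IsPosHomogeneous

theorem best_response_inner_convex (d : ℕ) (r s : ℝ) (hr : 1 < r)
    (hrs : 1 / r + 1 / s = 1)
    (f : EuclideanSpace ℝ (Fin d) → ℝ)
    (hconv : ConvexOn ℝ Set.univ f)
    (hhom : ∀ α : ℝ, 0 < α → ∀ z, f (α • z) = α ^ r * f z)
    (hpos : ∀ z, z ≠ 0 → 0 < f z)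
    (x : EuclideanSpace ℝ (Fin d)) :
    (∀ β xh : EuclideanSpace ℝ (Fin d),
        (∀ z, ⟪z, β⟫ - f (z - x) ≤ ⟪xh, β⟫ - f (xh - x)) →
        ⟪xh, β⟫ = ⟪x, β⟫ + s * sSup (Set.range fun z => ⟪β, z⟫ - f z)) ∧
    ConvexOn ℝ Set.univ
      (fun β : EuclideanSpace ℝ (Fin d) =>
        ⟪x, β⟫ + s * sSup (Set.range fun z => ⟪β, z⟫ - f z)) := by
  have hrs' : r.HolderConjugate s :=
    Real.holderConjugate_iff.mpr ⟨hr, by simpa only [one_div] using hrs⟩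
  constructor
  · intro β xh hxh
    set y := xh - x
    have hmax : ∀ w, ⟪w, β⟫ - f w ≤ ⟪y, β⟫ - f y := fun w => by
      have h := hxh (w + x)
      rw [add_sub_cancel_right, inner_add_left] at h
      rw [inner_sub_left]
      linarith
    have hsplit : ⟪xh, β⟫ = ⟪x, β⟫ + ⟪y, β⟫ := by rw [inner_sub_left]; ring
    rw [hsplit, IsPosHomogeneous.inner_eq_mul_iSup_of_forall_le hhom hrs' hmax]
    rfl
  · have hbdd := IsPosHomogeneous.bddAbove_range_inner_sub hhom hr
      (continuousOn_univ.mp (hconv.continuousOn isOpen_univ)) hpos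
    exact ((innerₛₗ ℝ x).convexOn convex_univ).add
      ((convexOn_iSup_inner_sub hbdd).smul hrs'.symm.pos.le)
end
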